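/- Let X be a separable real Banach space, r > 0, δ > 0, and let s, t be reals with 0 < s < min{δ, t}. Let x₀*, y₀* ∈ X* with ‖x₀*‖ = ‖y₀*‖ = r, put a = r + s and ε = 2δ/a, and assume: (i) there is a sequence (v_n*) in X* converging to 0 in the weak* topology with ‖v_n*‖ > δ for all n and ‖x₀* ± v_n*‖ ≤ a for all n and both signs; and (ii) for every sequence (u_n*) in X* converging to 0 in the weak* topology with ‖u_n*‖ > δ for all n, there exists m with ‖y₀* + u_m*‖ ≥ r + t. Then ε ∈ (0,2), x₀*/a ∈ s_ε B_{X*}, and y₀*/a ∉ s_ε B_{X*}. -/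

import Mathlib

/-!
If `v_n` is weak*-null with `‖v_n‖ > δ` and `‖x₀ ± v_n‖ ≤ a`, then the points `(x₀ ± v_n)/a` lie in
the dual ball, converge weak* to `x₀/a` and are `2‖v_n‖/a > ε` apart, so every weak*-neighbourhood
of `x₀/a` meets the ball in a set of diameter `> ε`.

Conversely, if `y₀/a` were in the derived set, every weak*-neighbourhood of it would contain a point
of the ball at distance `> ε/2 = δ/a` from it. By Banach–Alaoglu the dual ball of a separable space
is weak*-compact and metrizable, so these points can be taken to form a sequence `z_n → y₀/a`.
Then `u_n = a z_n - y₀` is weak*-null with `‖u_n‖ > δ` and `‖y₀ + u_n‖ = a‖z_n‖ ≤ r + s < r + t`,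
contradicting (ii).
-/

open Filter Topology Metric

/-- The ε-Szlenk derivation of the closed dual unit ball of `X`. -/
def szlenkDeriv (X : Type*) [NormedAddCommGroup X] [NormedSpace ℝ X] (ε : ℝ) :
    Set (StrongDual ℝ X) :=
  {x : StrongDual ℝ X | ‖x‖ ≤ 1 ∧
    ∀ V : Set (StrongDual ℝ X),
      IsOpen ((StrongDual.toWeakDual '' V : Set (WeakDual ℝ X))) → x ∈ V →
        ε < Metric.diam (Metric.closedBall (0 : StrongDual ℝ X) 1 ∩ V)}

/-- A sequence in the dual is weak*-null if it tends to `0` in the weak* topology. -/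
def WeakStarNull {X : Type*} [NormedAddCommGroup X] [NormedSpace ℝ X]
    (u : ℕ → StrongDual ℝ X) : Prop :=
  Filter.Tendsto (fun n => StrongDual.toWeakDual (u n)) Filter.atTop
    (nhds (0 : WeakDual ℝ X))

open StrongDual

lemma norm_le_of_norm_add_le_of_norm_sub_le {E : Type*} [SeminormedAddCommGroup E]
    [NormedSpace ℝ E] {x v : E} {a : ℝ} (hadd : ‖x + v‖ ≤ a) (hsub : ‖x - v‖ ≤ a) :
    ‖x‖ ≤ a := by
  have : 2 * ‖x‖ ≤ 2 * a :=
    calc 2 * ‖x‖ = ‖(x + v) + (x - v)‖ := by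
          rw [add_add_sub_cancel, ← two_smul ℝ, norm_smul, Real.norm_two]
      _ ≤ 2 * a := by linarith [norm_add_le (x + v) (x - v)]
  linarith

section

variable {X : Type*} [NormedAddCommGroup X] [NormedSpace ℝ X]

lemma weakStarNull_sub_iff {z : ℕ → StrongDual ℝ X} {x : StrongDual ℝ X} :
    WeakStarNull (fun n => z n - x) ↔
      Tendsto (fun n => toWeakDual (z n)) atTop (𝓝 (toWeakDual x)) := by
  simp only [WeakStarNull, map_sub]
  exact tendsto_sub_nhds_zero_iff

lemma WeakStarNull.const_smul {u : ℕ → StrongDual ℝ X} (hu : WeakStarNull u) (c : ℝ) :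
    WeakStarNull (fun n => c • u n) := by
  simpa [WeakStarNull] using Tendsto.const_smul hu c

lemma WeakStarNull.neg {u : ℕ → StrongDual ℝ X} (hu : WeakStarNull u) :
    WeakStarNull (fun n => -u n) := by
  simpa [WeakStarNull] using Tendsto.neg hu

lemma mem_szlenkDeriv_of_tendsto {ε : ℝ} {x : StrongDual ℝ X} {p q : ℕ → StrongDual ℝ X}
    (hx : ‖x‖ ≤ 1) (hp : ∀ n, ‖p n‖ ≤ 1) (hq : ∀ n, ‖q n‖ ≤ 1)
    (hpx : Tendsto (fun n => toWeakDual (p n)) atTop (𝓝 (toWeakDual x)))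
    (hqx : Tendsto (fun n => toWeakDual (q n)) atTop (𝓝 (toWeakDual x)))
    (hpq : ∀ n, ε < dist (p n) (q n)) : x ∈ szlenkDeriv X ε := by
  refine ⟨hx, fun V hV hxV => ?_⟩
  have hVx : toWeakDual '' V ∈ 𝓝 (toWeakDual x) := hV.mem_nhds (Set.mem_image_of_mem _ hxV)
  obtain ⟨n, ⟨p', hp'V, hp'⟩, ⟨q', hq'V, hq'⟩⟩ :=
    ((hpx.eventually_mem hVx).and (hqx.eventually_mem hVx)).exists
  rw [toWeakDual_inj] at hp' hq'
  subst hp' hq'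
  have hbdd : Bornology.IsBounded (closedBall (0 : StrongDual ℝ X) 1 ∩ V) :=
    isBounded_closedBall.subset Set.inter_subset_left
  exact (hpq n).trans_le (dist_le_diam_of_mem hbdd
    ⟨mem_closedBall_zero_iff.2 (hp n), hp'V⟩ ⟨mem_closedBall_zero_iff.2 (hq n), hq'V⟩)

lemma exists_half_lt_dist_of_mem_szlenkDeriv {ε : ℝ} {x : StrongDual ℝ X}
    (hx : x ∈ szlenkDeriv X ε) {W : Set (WeakDual ℝ X)} (hW : IsOpen W)
    (hxW : toWeakDual x ∈ W) :
    ∃ z : StrongDual ℝ X, ‖z‖ ≤ 1 ∧ toWeakDual z ∈ W ∧ ε / 2 < dist z x := by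
  have hdiam := hx.2 (toWeakDual ⁻¹' W)
    (by rwa [Set.image_preimage_eq _ toWeakDual.surjective]) hxW
  have hne : (closedBall (0 : StrongDual ℝ X) 1 ∩ toWeakDual ⁻¹' W).Nonempty :=
    ⟨x, mem_closedBall_zero_iff.2 hx.1, hxW⟩
  by_contra! hnear
  refine hdiam.not_ge (diam_le_of_forall_dist_le_of_nonempty hne fun p hp q hq => ?_)
  have hpx := hnear p (mem_closedBall_zero_iff.1 hp.1) hp.2
  have hqx := hnear q (mem_closedBall_zero_iff.1 hq.1) hq.2
  linarith [dist_triangle_right p q x]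

lemma exists_seq_tendsto_of_mem_szlenkDeriv [TopologicalSpace.SeparableSpace X] {ε : ℝ}
    {x : StrongDual ℝ X} (hx : x ∈ szlenkDeriv X ε) :
    ∃ z : ℕ → StrongDual ℝ X, (∀ n, ‖z n‖ ≤ 1) ∧ (∀ n, ε / 2 < dist (z n) x) ∧
      Tendsto (fun n => toWeakDual (z n)) atTop (𝓝 (toWeakDual x)) := by
  set K : Set (WeakDual ℝ X) := WeakDual.toStrongDual ⁻¹' closedBall 0 1
  have := WeakDual.metrizable_of_isCompact ℝ X K
    (WeakDual.isCompact_closedBall (0 : StrongDual ℝ X) 1)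
  let x' : K := ⟨toWeakDual x, by simpa [K] using hx.1⟩
  have hclosure : x' ∈ closure {z : K | ε / 2 < dist (WeakDual.toStrongDual z.1) x} := by
    refine mem_closure_iff.2 fun U hU hxU => ?_
    obtain ⟨W, hW, rfl⟩ := isOpen_induced_iff.1 hU
    obtain ⟨z, hz1, hzW, hzx⟩ := exists_half_lt_dist_of_mem_szlenkDeriv hx hW hxU
    exact ⟨⟨toWeakDual z, by simpa [K] using hz1⟩, hzW, hzx⟩
  obtain ⟨z, hzS, hzx⟩ := mem_closure_iff_seq_limit.1 hclosure
  exact ⟨fun n => WeakDual.toStrongDual (z n).1, fun n => mem_closedBall_zero_iff.1 (z n).2,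
    hzS, (continuous_subtype_val.tendsto x').comp hzx⟩

lemma smul_mem_szlenkDeriv_of_weakStarNull {a δ : ℝ} (ha : 0 < a) {x : StrongDual ℝ X}
    {v : ℕ → StrongDual ℝ X} (hv : WeakStarNull v) (hvδ : ∀ n, δ < ‖v n‖)
    (hadd : ∀ n, ‖x + v n‖ ≤ a) (hsub : ∀ n, ‖x - v n‖ ≤ a) :
    (1 / a) • x ∈ szlenkDeriv X (2 * δ / a) := by
  have hball : ∀ z : StrongDual ℝ X, ‖z‖ ≤ a → ‖(1 / a) • z‖ ≤ 1 := fun z hz => by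
    rw [norm_smul, Real.norm_of_nonneg (by positivity), one_div, inv_mul_le_one₀ ha]
    exact hz
  refine mem_szlenkDeriv_of_tendsto (p := fun n => (1 / a) • (x + v n))
    (q := fun n => (1 / a) • (x - v n))
    (hball x (norm_le_of_norm_add_le_of_norm_sub_le (hadd 0) (hsub 0)))
    (fun n => hball _ (hadd n)) (fun n => hball _ (hsub n)) ?_ ?_ fun n => ?_
  · rw [← weakStarNull_sub_iff]
    simpa [smul_add] using hv.const_smul (1 / a)
  · rw [← weakStarNull_sub_iff]
    simpa [smul_sub] using (hv.const_smul (1 / a)).neg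
  · calc 2 * δ / a < 2 * ‖v n‖ / a := by gcongr; exact hvδ n
      _ = dist ((1 / a) • (x + v n)) ((1 / a) • (x - v n)) := by
        rw [dist_eq_norm, show (1 / a) • (x + v n) - (1 / a) • (x - v n) = (2 / a) • v n by
          module, norm_smul, Real.norm_of_nonneg (by positivity)]
        ring

lemma exists_weakStarNull_of_smul_mem_szlenkDeriv [TopologicalSpace.SeparableSpace X]
    {a δ : ℝ} (ha : 0 < a) {y : StrongDual ℝ X} (hy : (1 / a) • y ∈ szlenkDeriv X (2 * δ / a)) :
    ∃ u : ℕ → StrongDual ℝ X, WeakStarNull u ∧ (∀ n, δ < ‖u n‖) ∧ ∀ n, ‖y + u n‖ ≤ a := by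
  obtain ⟨z, hz1, hzy, hzlim⟩ := exists_seq_tendsto_of_mem_szlenkDeriv hy
  refine ⟨fun n => a • (z n - (1 / a) • y), (weakStarNull_sub_iff.2 hzlim).const_smul a,
    fun n => ?_, fun n => ?_⟩
  · rw [norm_smul, Real.norm_of_nonneg ha.le, ← dist_eq_norm]
    calc δ = a * (2 * δ / a / 2) := by field_simp
      _ < a * dist (z n) ((1 / a) • y) := by gcongr; exact hzy n
  · dsimp only
    rw [smul_sub, smul_smul, mul_one_div_cancel ha.ne', one_smul, add_sub_cancel, norm_smul,
      Real.norm_of_nonneg ha.le]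
    exact mul_le_of_le_one_right ha.le (hz1 n)

end

theorem szlenkDeriv_mem_and_not_mem_of_test_general (X : Type*) [NormedAddCommGroup X]
    [NormedSpace ℝ X] [TopologicalSpace.SeparableSpace X]
    (r δ s t : ℝ) (hδ : 0 < δ)
    (hst : s < min δ t)
    (x₀ y₀ : StrongDual ℝ X)
    (a : ℝ) (ha : a = r + s) (ε : ℝ) (hε : ε = 2 * δ / a)
    (hi : ∃ v : ℕ → StrongDual ℝ X, WeakStarNull v ∧
      (∀ n, δ < ‖v n‖) ∧ (∀ n, ‖x₀ + v n‖ ≤ a) ∧ (∀ n, ‖x₀ - v n‖ ≤ a))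
    (hii : ∀ u : ℕ → StrongDual ℝ X, WeakStarNull u →
      (∀ n, δ < ‖u n‖) → ∃ m, r + t ≤ ‖y₀ + u m‖) :
    ε ∈ Set.Ioo (0 : ℝ) 2 ∧
      (1 / a) • x₀ ∈ szlenkDeriv X ε ∧ (1 / a) • y₀ ∉ szlenkDeriv X ε := by
  obtain ⟨v, hv, hvδ, hadd, hsub⟩ := hi
  have hδa : δ < a := (hvδ 0).trans_le <| norm_le_of_norm_add_le_of_norm_sub_le (x := v 0)
    (v := x₀) (by rw [add_comm]; exact hadd 0) (by rw [norm_sub_rev]; exact hsub 0)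
  have ha₀ : 0 < a := hδ.trans hδa
  subst hε
  refine ⟨⟨by positivity, by rw [div_lt_iff₀ ha₀]; linarith⟩,
    smul_mem_szlenkDeriv_of_weakStarNull ha₀ hv hvδ hadd hsub, fun hy => ?_⟩
  obtain ⟨u, hu, huδ, hua⟩ := exists_weakStarNull_of_smul_mem_szlenkDeriv ha₀ hy
  obtain ⟨m, hm⟩ := hii u hu huδ
  linarith [hua m, min_le_right δ t]

theorem szlenkDeriv_mem_and_not_mem_of_test (X : Type*) [NormedAddCommGroup X]
    [NormedSpace ℝ X] [CompleteSpace X] [TopologicalSpace.SeparableSpace X]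
    (r δ s t : ℝ) (hr : 0 < r) (hδ : 0 < δ)
    (hs : 0 < s) (hst : s < min δ t)
    (x₀ y₀ : StrongDual ℝ X) (hx₀ : ‖x₀‖ = r) (hy₀ : ‖y₀‖ = r)
    (a : ℝ) (ha : a = r + s) (ε : ℝ) (hε : ε = 2 * δ / a)
    (hi : ∃ v : ℕ → StrongDual ℝ X, WeakStarNull v ∧
      (∀ n, δ < ‖v n‖) ∧ (∀ n, ‖x₀ + v n‖ ≤ a) ∧ (∀ n, ‖x₀ - v n‖ ≤ a))
    (hii : ∀ u : ℕ → StrongDual ℝ X, WeakStarNull u →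
      (∀ n, δ < ‖u n‖) → ∃ m, r + t ≤ ‖y₀ + u m‖) :
    ε ∈ Set.Ioo (0 : ℝ) 2 ∧
      (1 / a) • x₀ ∈ szlenkDeriv X ε ∧ (1 / a) • y₀ ∉ szlenkDeriv X ε :=
  szlenkDeriv_mem_and_not_mem_of_test_general X r δ s t hδ hst x₀ y₀ a ha ε hε hi hii
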